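/- Let k, s, m, n be positive integers with k < m ≤ n and gcd(s,n) = 1, and let U be an m-dimensional K-subspace of F. Let E be the largest intermediate field of F/K such that U is an E-subspace of F. Then the middle nucleus of π_U(G_{k,s}) is N_m(π_U(G_{k,s})) = {cX : c ∈ E}. -/

import Mathlib

/-- The set `G_{k,s}` of linearized polynomials
`a₀ X + a₁ X^{q^s} + ⋯ + a_{k-1} X^{q^{s(k-1)}}` with `a₀, …, a_{k-1} ∈ F`. -/
def Gks (q k s : ℕ) (F : Type*) [Field F] : Set (Polynomial F) :=
  {p | ∃ a : Fin k → F, p = ∑ i : Fin k, Polynomial.C (a i) * Polynomial.X ^ q ^ (s * (i : ℕ))}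

/-- The middle nucleus `N_m(π_U(C)) = {ψ ∈ End_K(U) : π_U(f ∘ ψ) ∈ π_U(C) ∀ f ∈ C}`
of the projection to `U` of a set `C` of (linearized) polynomials. -/
def middleNucleus {K F : Type*} [Field K] [Field F] [Algebra K F]
    (U : Submodule K F) (C : Set (Polynomial F)) : Set (Module.End K U) :=
  {ψ | ∀ f ∈ C, ∃ g ∈ C, ∀ x : U, f.eval ((ψ x : F)) = g.eval (x : F)}

/-!
Write `σ` for `x ↦ x ^ q ^ s`, so that `∑ aᵢ X ^ q ^ (s i)` acts as the skew polynomial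
`∑ aᵢ σⁱ`; since `gcd(s, n) = 1`, the fixed field of `σ` is `K`. The key fact is that a nonzero
`σ`-polynomial of degree `d` has a kernel of `K`-dimension at most `d`: after twisting by a
nonzero root `u` it vanishes at `1`, hence factors through `σ - 1`, whose kernel is `K`.

If `ψ` lies in the middle nucleus, then `f = X` shows `ψ = ∑ bᵢ σⁱ` on `U` with `deg b < k`.
Should `d = deg b` be positive, `σ ^ (k - d) ∘ ψ` agrees on `U` with a `σ`-polynomial of degree
`< k`, so their difference is a nonzero `σ`-polynomial of degree exactly `k` vanishing on `U`,
contradicting `dim U = m > k`. Hence `ψ = b₀ X`, and `b₀` stabilizes `U`, so `b₀ ∈ E`.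
-/

open Polynomial Module
open LinearMap (ker range)

theorem LinearMap.finrank_ker_comp_le {K V W X : Type*} [Field K] [AddCommGroup V] [Module K V]
    [AddCommGroup W] [Module K W] [AddCommGroup X] [Module K X] [FiniteDimensional K V]
    [FiniteDimensional K W] (f : W →ₗ[K] X) (g : V →ₗ[K] W) :
    finrank K (ker (f ∘ₗ g)) ≤ finrank K (ker f) + finrank K (ker g) := by
  set h := g.domRestrict (ker (f ∘ₗ g))
  have hrange : range h ≤ ker f := by
    rintro _ ⟨x, rfl⟩
    exact x.2
  have hker : finrank K (ker h) = finrank K (ker g) := by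
    rw [LinearMap.ker_domRestrict]
    exact (Submodule.comapSubtypeEquivOfLe (LinearMap.ker_le_ker_comp g f)).finrank_eq
  rw [← h.finrank_range_add_finrank_ker, hker]
  exact Nat.add_le_add_right (Submodule.finrank_mono hrange) _

theorem LinearMap.finrank_ker_le_finrank_ker_comp_of_surjective {K V W X : Type*} [Field K]
    [AddCommGroup V] [Module K V] [AddCommGroup W] [Module K W] [AddCommGroup X] [Module K X]
    [FiniteDimensional K V] (f : W →ₗ[K] X) {g : V →ₗ[K] W} (hg : Function.Surjective g) :
    finrank K (ker f) ≤ finrank K (ker (f ∘ₗ g)) := by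
  have := Submodule.finrank_map_le g (ker (f ∘ₗ g))
  rwa [LinearMap.ker_comp, Submodule.map_comap_eq_of_surjective hg] at this

def Submodule.fieldStabilizer {K F : Type*} [Field K] [Field F] [Algebra K F]
    (U : Submodule K F) [FiniteDimensional K U] : IntermediateField K F where
  carrier := {c | ∀ x ∈ U, c * x ∈ U}
  mul_mem' ha hb x hx := by rw [mul_assoc]; exact ha _ (hb x hx)
  add_mem' ha hb x hx := by rw [add_mul]; exact U.add_mem (ha x hx) (hb x hx)
  algebraMap_mem' a x hx := by rw [← Algebra.smul_def]; exact U.smul_mem a hx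
  inv_mem' c hc x hx := by
    rcases eq_or_ne c 0 with rfl | hc0
    · simp
    have hinj : Function.Injective ((LinearMap.mulLeft K c).restrict hc) := fun y z h =>
      Subtype.ext (mul_left_cancel₀ hc0 (congrArg Subtype.val h))
    obtain ⟨y, hy⟩ := LinearMap.injective_iff_surjective.mp hinj ⟨x, hx⟩
    have hy' : c * y = x := congrArg Subtype.val hy
    rw [← hy', inv_mul_cancel_left₀ hc0]
    exact y.2

section Linearized

variable {K F : Type*} [Field K] [Field F] [Algebra K F]

/-- The skew polynomial `∑ aᵢ σⁱ`, encoded by the ordinary polynomial `∑ aᵢ Xⁱ`. -/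
noncomputable def linearizedMap (σ : F →ₐ[K] F) : F[X] →ₗ[F] F →ₗ[K] F :=
  lsum fun i => LinearMap.toSpanSingleton F _ (σ ^ i).toLinearMap

noncomputable def twistCoeff (σ : F →ₐ[K] F) (u : F) : F[X] →ₗ[F] F[X] :=
  lsum fun i => monomial i ∘ₗ LinearMap.mulRight F ((σ ^ i) u)

variable (σ : F →ₐ[K] F)

theorem linearizedMap_apply (p : F[X]) (x : F) :
    linearizedMap σ p x = p.sum fun i a => a * (σ ^ i) x := by
  simp [linearizedMap, Polynomial.sum_def, LinearMap.sum_apply]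

@[simp] theorem linearizedMap_monomial (i : ℕ) (a x : F) :
    linearizedMap σ (monomial i a) x = a * (σ ^ i) x := by
  simp [linearizedMap_apply]

theorem linearizedMap_X_pow (j : ℕ) : linearizedMap σ (X ^ j) = (σ ^ j).toLinearMap := by
  ext x
  simp [← monomial_one_right_eq_X_pow]

@[simp] theorem linearizedMap_one : linearizedMap σ 1 = LinearMap.id := by
  ext x
  simpa using LinearMap.congr_fun (linearizedMap_X_pow σ 0) x

theorem linearizedMap_apply_one (p : F[X]) : linearizedMap σ p 1 = p.eval 1 := by
  simp [linearizedMap_apply, eval_eq_sum]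

theorem linearizedMap_mul_X_sub_one (p : F[X]) :
    linearizedMap σ (p * (X - 1)) = linearizedMap σ p ∘ₗ (σ.toLinearMap - LinearMap.id) := by
  induction p using Polynomial.induction_on' with
  | add p q hp hq => rw [add_mul, map_add, map_add, hp, hq, LinearMap.add_comp]
  | monomial n a =>
    ext x
    simp [mul_sub, monomial_mul_X, pow_succ]

@[simp] theorem coeff_twistCoeff (u : F) (p : F[X]) (i : ℕ) :
    (twistCoeff σ u p).coeff i = p.coeff i * (σ ^ i) u := by
  induction p using Polynomial.induction_on' with
  | add p q hp hq => simp [hp, hq, add_mul]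
  | monomial n a =>
    simp only [twistCoeff, lsum_apply, LinearMap.coe_comp, Function.comp_apply,
      LinearMap.mulRight_apply, sum_monomial_index, map_zero, zero_mul, coeff_monomial]
    split_ifs <;> simp_all

theorem twistCoeff_mem_degreeLT (u : F) {k : ℕ} {p : F[X]} (hp : p ∈ degreeLT F k) :
    twistCoeff σ u p ∈ degreeLT F k := by
  rw [mem_degreeLT, degree_lt_iff_coeff_zero] at hp ⊢
  intro i hi
  rw [coeff_twistCoeff, hp i hi, zero_mul]

theorem linearizedMap_twistCoeff (u : F) (p : F[X]) :
    linearizedMap σ (twistCoeff σ u p) = linearizedMap σ p ∘ₗ LinearMap.mulLeft K u := by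
  induction p using Polynomial.induction_on' with
  | add p q hp hq => rw [map_add, map_add, hp, hq, map_add, LinearMap.add_comp]
  | monomial n a =>
    ext x
    simp [twistCoeff, mul_assoc]

theorem pow_comp_linearizedMap (j : ℕ) (p : F[X]) :
    (σ ^ j).toLinearMap ∘ₗ linearizedMap σ p
      = linearizedMap σ (X ^ j * p.map ((σ ^ j : F →ₐ[K] F) : F →+* F)) := by
  induction p using Polynomial.induction_on' with
  | add p q hp hq =>
    rw [map_add, LinearMap.comp_add, hp, hq, Polynomial.map_add, mul_add, map_add]
  | monomial n a =>
    ext x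
    simp [X_pow_mul_monomial, pow_add, add_comm n j]

end Linearized

section KernelBound

variable {K F : Type*} [Field K] [Field F] [Algebra K F] {σ : F →ₐ[K] F}

theorem finrank_ker_sub_id_le (hσ : ∀ x, σ x = x → x ∈ Set.range (algebraMap K F)) :
    finrank K (ker (σ.toLinearMap - LinearMap.id)) ≤ 1 := by
  have : ker (σ.toLinearMap - LinearMap.id) ≤ range (Algebra.linearMap K F) := fun x hx =>
    hσ x (sub_eq_zero.mp hx)
  exact (Submodule.finrank_mono this).trans
    ((LinearMap.finrank_range_le _).trans (finrank_self K).le)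

theorem finrank_ker_linearizedMap_le [FiniteDimensional K F]
    (hσ : ∀ x, σ x = x → x ∈ Set.range (algebraMap K F)) {n : ℕ} {p : F[X]} (hp : p ≠ 0)
    (hn : p.natDegree ≤ n) : finrank K (ker (linearizedMap σ p)) ≤ n := by
  induction n generalizing p with
  | zero =>
    rw [eq_C_of_natDegree_eq_zero (Nat.le_zero.mp hn)] at hp ⊢
    have : ker (linearizedMap σ (C (p.coeff 0))) = ⊥ := by
      refine LinearMap.ker_eq_bot'.mpr fun x hx => ?_
      simpa [← monomial_zero_left, C_ne_zero.mp hp] using hx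
    simp [this]
  | succ n ih =>
    by_cases hbot : ker (linearizedMap σ p) = ⊥
    · rw [hbot, finrank_bot]
      omega
    obtain ⟨u, hu, hu0⟩ := Submodule.exists_mem_ne_zero_of_ne_bot hbot
    set p' := twistCoeff σ u p
    have hp' : linearizedMap σ p' = linearizedMap σ p ∘ₗ LinearMap.mulLeft K u :=
      linearizedMap_twistCoeff σ u p
    have hp'0 : p' ≠ 0 := by
      have : p'.coeff p.natDegree ≠ 0 := by
        rw [coeff_twistCoeff]
        exact mul_ne_zero (leadingCoeff_ne_zero.mpr hp) ((_root_.map_ne_zero _).mpr hu0)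
      exact fun h => this (by rw [h, coeff_zero])
    have hp'deg : p'.natDegree ≤ n + 1 :=
      natDegree_le_iff_coeff_eq_zero.mpr fun i hi => by
        simp [p', coeff_eq_zero_of_natDegree_lt (hn.trans_lt hi)]
    have hroot : p'.IsRoot 1 := by
      rw [IsRoot, ← linearizedMap_apply_one σ, hp']
      simpa using hu
    set r := p' /ₘ (X - C 1)
    have hr : p' = r * (X - 1) := by
      rw [mul_comm, ← C_1, mul_divByMonic_eq_iff_isRoot.mpr hroot]
    have hr0 : r ≠ 0 := by
      rintro h
      rw [h, zero_mul] at hr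
      exact hp'0 hr
    have hrdeg : r.natDegree ≤ n := by
      rw [natDegree_divByMonic _ (monic_X_sub_C 1), natDegree_X_sub_C]
      omega
    have hmul : Function.Surjective (LinearMap.mulLeft K u) := fun y =>
      ⟨u⁻¹ * y, by simp [hu0]⟩
    calc finrank K (ker (linearizedMap σ p))
        ≤ finrank K (ker (linearizedMap σ p ∘ₗ LinearMap.mulLeft K u)) :=
          LinearMap.finrank_ker_le_finrank_ker_comp_of_surjective _ hmul
      _ = finrank K (ker (linearizedMap σ r ∘ₗ (σ.toLinearMap - LinearMap.id))) := by
          rw [← hp', hr, linearizedMap_mul_X_sub_one]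
      _ ≤ finrank K (ker (linearizedMap σ r)) + finrank K (ker (σ.toLinearMap - LinearMap.id)) :=
          LinearMap.finrank_ker_comp_le _ _
      _ ≤ n + 1 := add_le_add (ih hr0 hrdeg) (finrank_ker_sub_id_le hσ)

theorem natDegree_eq_zero_of_pow_comp_linearizedMap [FiniteDimensional K F]
    (hσ : ∀ x, σ x = x → x ∈ Set.range (algebraMap K F)) {U : Submodule K F}
    {k : ℕ} (hkU : k < finrank K U) {b : F[X]} (hb : b ∈ degreeLT F k)
    (h : ∀ j < k, ∃ c ∈ degreeLT F k, ∀ x ∈ U,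
      (σ ^ j) (linearizedMap σ b x) = linearizedMap σ c x) :
    b.natDegree = 0 := by
  by_contra hd
  have hb0 : b ≠ 0 := by
    rintro rfl
    exact hd natDegree_zero
  have hdk : b.natDegree < k := (natDegree_lt_iff_degree_lt hb0).mpr (mem_degreeLT.mp hb)
  set j := k - b.natDegree
  obtain ⟨c, hc, hcU⟩ := h j (by omega)
  set σj : F →+* F := ((σ ^ j : F →ₐ[K] F) : F →+* F)
  have hσj : Function.Injective σj := σj.injective
  have hmap0 : b.map σj ≠ 0 := (Polynomial.map_ne_zero_iff hσj).mpr hb0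
  have hlead : (X ^ j * b.map σj).degree = (k : WithBot ℕ) := by
    rw [degree_eq_natDegree (mul_ne_zero (pow_ne_zero _ X_ne_zero) hmap0),
      natDegree_X_pow_mul _ hmap0, natDegree_map_eq_of_injective hσj]
    norm_cast
    omega
  set r := X ^ j * b.map σj - c
  have hr : r.degree = k := by
    rw [degree_sub_eq_left_of_degree_lt (hlead ▸ mem_degreeLT.mp hc), hlead]
  have hr0 : r ≠ 0 := fun h => by simp [h] at hr
  have hUr : U ≤ ker (linearizedMap σ r) := fun x hx => by
    rw [LinearMap.mem_ker, map_sub, LinearMap.sub_apply, ← pow_comp_linearizedMap,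
      LinearMap.comp_apply, AlgHom.toLinearMap_apply, hcU x hx, sub_self]
  have := (Submodule.finrank_mono hUr).trans
    (finrank_ker_linearizedMap_le hσ hr0 (natDegree_eq_of_degree_eq_some hr).le)
  omega

end KernelBound

namespace FiniteField

variable {K F : Type*} [Field K] [Fintype K] [Field F] [Algebra K F]

theorem frobeniusAlgHom_pow_apply (t : ℕ) (x : F) :
    (frobeniusAlgHom K F ^ t) x = x ^ Fintype.card K ^ t := by
  rw [AlgHom.coe_pow, coe_frobeniusAlgHom, pow_iterate]

theorem mem_range_algebraMap_of_frobeniusAlgHom_pow_apply_eq [Finite F] {s : ℕ}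
    (hs : s.Coprime (finrank K F)) {x : F} (hx : (frobeniusAlgHom K F ^ s) x = x) :
    x ∈ Set.range (algebraMap K F) := by
  set φ := frobeniusAlgHom K F
  have hn : Function.IsPeriodicPt φ (finrank K F) x := by
    rw [Function.IsPeriodicPt, Function.IsFixedPt, ← AlgHom.coe_pow,
      ← orderOf_frobeniusAlgHom, pow_orderOf_eq_one, AlgHom.one_apply]
  have hs' : Function.IsPeriodicPt φ s x := by
    rwa [Function.IsPeriodicPt, Function.IsFixedPt, ← AlgHom.coe_pow]
  have hφ : φ x = x := by
    simpa [hs.gcd_eq_one, Function.IsPeriodicPt, Function.IsFixedPt] using hs'.gcd hn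
  rw [IsGalois.mem_range_algebraMap_iff_fixed]
  intro g
  obtain ⟨i, rfl⟩ := (bijective_frobeniusAlgEquivOfAlgebraic_pow K F).2 g
  rw [AlgEquiv.coe_pow]
  exact Function.iterate_fixed hφ i

end FiniteField

theorem mem_Gks_iff {F : Type*} [Field F] {q k s : ℕ} {f : F[X]} :
    f ∈ Gks q k s F ↔ ∃ p ∈ degreeLT F k, f = ∑ i : Fin k, C (p.coeff i) * X ^ q ^ (s * i) := by
  constructor
  · rintro ⟨a, rfl⟩
    refine ⟨(degreeLTEquiv F k).symm a, Submodule.coe_mem _, Finset.sum_congr rfl fun i _ => ?_⟩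
    rw [← congrFun ((degreeLTEquiv F k).apply_symm_apply a) i]
    rfl
  · rintro ⟨p, -, rfl⟩
    exact ⟨_, rfl⟩

theorem eval_sum_C_coeff_mul_X_pow {K F : Type*} [Field K] [Fintype K] [Field F] [Algebra K F]
    {k : ℕ} (s : ℕ) {p : F[X]} (hp : p ∈ degreeLT F k) (y : F) :
    (∑ i : Fin k, C (p.coeff i) * X ^ Fintype.card K ^ (s * i)).eval y
      = linearizedMap (FiniteField.frobeniusAlgHom K F ^ s) p y := by
  rw [linearizedMap_apply, ← sum_fin _ (by simp) (mem_degreeLT.mp hp), eval_finsetSum]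
  simp [← pow_mul, FiniteField.frobeniusAlgHom_pow_apply]

theorem mem_middleNucleus_Gks_iff {K F : Type*} [Field K] [Fintype K] [Field F] [Algebra K F]
    {q k s : ℕ} (hq : q = Fintype.card K) (U : Submodule K F) (ψ : Module.End K U) :
    ψ ∈ middleNucleus U (Gks q k s F) ↔ ∀ p ∈ degreeLT F k, ∃ p' ∈ degreeLT F k, ∀ x : U,
      linearizedMap (FiniteField.frobeniusAlgHom K F ^ s) p (ψ x)
        = linearizedMap (FiniteField.frobeniusAlgHom K F ^ s) p' x := by
  subst hq
  simp only [middleNucleus, Set.mem_ofPred_eq, mem_Gks_iff]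
  constructor
  · intro h p hp
    obtain ⟨_, ⟨p', hp', rfl⟩, hpp'⟩ := h _ ⟨p, hp, rfl⟩
    exact ⟨p', hp', fun x => by
      rw [← eval_sum_C_coeff_mul_X_pow s hp, ← eval_sum_C_coeff_mul_X_pow s hp', hpp']⟩
  · rintro h _ ⟨p, hp, rfl⟩
    obtain ⟨p', hp', hpp'⟩ := h p hp
    exact ⟨_, ⟨p', hp', rfl⟩, fun x => by
      rw [eval_sum_C_coeff_mul_X_pow s hp, eval_sum_C_coeff_mul_X_pow s hp', hpp']⟩

theorem middle_nucleus_of_gabidulin_general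
    (K F : Type*) [Field K] [Fintype K] [Field F] [Fintype F] [Algebra K F]
    (q k s m n : ℕ) (hq : q = Fintype.card K) (hn : Module.finrank K F = n)
    (hgcd : Nat.gcd s n = 1) (hk : 0 < k) (hkm : k < m)
    (U : Submodule K F) (hU : Module.finrank K U = m)
    (E : IntermediateField K F)
    (hEmax : ∀ E' : IntermediateField K F, (∀ c ∈ E', ∀ x ∈ U, c * x ∈ U) → E' ≤ E) :
    middleNucleus U (Gks q k s F) =
      {ψ : Module.End K U | ∃ c ∈ E, ∀ x : U, (ψ x : F) = c * (x : F)} := by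
  set σ := FiniteField.frobeniusAlgHom K F ^ s
  have hσ : ∀ x, σ x = x → x ∈ Set.range (algebraMap K F) := fun _ =>
    FiniteField.mem_range_algebraMap_of_frobeniusAlgHom_pow_apply_eq (hn ▸ hgcd)
  ext ψ
  rw [mem_middleNucleus_Gks_iff hq]
  constructor
  · intro hψ
    obtain ⟨b, hb, hψb⟩ := hψ 1 (by rw [mem_degreeLT, degree_one]; exact_mod_cast hk)
    simp only [linearizedMap_one, LinearMap.id_apply] at hψb
    have hb0 : b.natDegree = 0 := by
      refine natDegree_eq_zero_of_pow_comp_linearizedMap hσ (hU ▸ hkm) hb fun j hj => ?_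
      obtain ⟨c, hc, hψc⟩ := hψ (X ^ j) (by rw [mem_degreeLT, degree_X_pow]; exact_mod_cast hj)
      exact ⟨c, hc, fun x hx => by
        rw [← hψb ⟨x, hx⟩, ← hψc ⟨x, hx⟩, linearizedMap_X_pow]
        rfl⟩
    have hψc : ∀ x : U, (ψ x : F) = b.coeff 0 * x := fun x => by
      rw [hψb, eq_C_of_natDegree_eq_zero hb0, ← monomial_zero_left, linearizedMap_monomial]
      simp
    refine ⟨b.coeff 0, hEmax U.fieldStabilizer (fun c hc => hc) fun x hx => ?_, hψc⟩
    exact hψc ⟨x, hx⟩ ▸ (ψ ⟨x, hx⟩).2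
  · rintro ⟨c, -, hc⟩ p hp
    exact ⟨twistCoeff σ c p, twistCoeff_mem_degreeLT σ c hp, fun x => by
      rw [hc, linearizedMap_twistCoeff]
      rfl⟩

/-- Let `E` be the largest intermediate field of `F/K` such that the `m`-dimensional
`K`-subspace `U` is an `E`-subspace of `F`. Then the middle nucleus of the projected
Gabidulin code `π_U(G_{k,s})` is `{cX : c ∈ E}`. -/
theorem middle_nucleus_of_gabidulin
    (K F : Type*) [Field K] [Fintype K] [Field F] [Fintype F] [Algebra K F]
    (q k s m n : ℕ) (hq : q = Fintype.card K) (hn : Module.finrank K F = n)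
    (hs : 0 < s) (hgcd : Nat.gcd s n = 1) (hk : 0 < k) (hkm : k < m) (hmn : m ≤ n)
    (U : Submodule K F) (hU : Module.finrank K U = m)
    (E : IntermediateField K F)
    (hE : ∀ c ∈ E, ∀ x ∈ U, c * x ∈ U)
    (hEmax : ∀ E' : IntermediateField K F, (∀ c ∈ E', ∀ x ∈ U, c * x ∈ U) → E' ≤ E) :
    middleNucleus U (Gks q k s F) =
      {ψ : Module.End K U | ∃ c ∈ E, ∀ x : U, (ψ x : F) = c * (x : F)} :=
  middle_nucleus_of_gabidulin_general K F q k s m n hq hn hgcd hk hkm U hU E hEmax
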